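/- arXiv:math/0601068 — 2 statements merged into one kernel-verified Lean document; each statement's English description precedes it below -/
import Mathlib

section
/- In a connected infinite magmatic bialgebra H, the idempotent e := J - Σ_{n≥2} ⋆_n ∘ J^{⊗n} kills all products of augmentation-ideal elements: for all n ≥ 2 and x_1, ..., x_n ∈ H̄, e(μ_n(x_1 ⊗ ··· ⊗ x_n)) = 0. -/
open scoped TensorProduct PiTensorProduct

noncomputable section

/-- Planar rooted trees: a leaf, or the grafting of `k + 2` trees onto a new root. -/
inductive PTree : Type
  | leaf : PTree
  | graft : (k : ℕ) → (Fin (k + 2) → PTree) → PTree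

namespace PTree

/-- Number of leaves of a planar rooted tree. -/
@[reducible] noncomputable def leaves (t : PTree) : ℕ :=
  PTree.rec 1 (fun _ _ ih => ∑ i, ih i) t

/-- The `n`-corolla (with `n = k + 2` leaves). -/
def corolla (k : ℕ) : PTree := .graft k fun _ => .leaf

/-- Height of a planar rooted tree: the maximal number of internal vertices on a
path from the root to a leaf (so the leaf `|` has height 0 and the corollas have
height 1). -/
@[reducible] noncomputable def height (t : PTree) : ℕ :=
  PTree.rec 0 (fun _ _ ih => (Finset.univ.sup ih) + 1) t

end PTree

/-- The index in `Fin (n_1 + ⋯ + n_k)` corresponding to the pair `(j, i)` with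
`i : Fin (n j)` (concatenation of blocks, in order). -/
def sigmaIdx {k : ℕ} (n : Fin k → ℕ) (j : Fin k) (i : Fin (n j)) : Fin (∑ j', n j') :=
  ⟨(∑ j' ∈ Finset.univ.filter (fun j' => j' < j), n j') + i.1, by
    have hj : j ∉ Finset.univ.filter (fun j' => j' < j) := by simp
    have h2 : (∑ j' ∈ insert j (Finset.univ.filter (fun j' => j' < j)), n j') ≤ ∑ j', n j' :=
      Finset.sum_le_sum_of_subset (Finset.subset_univ _)
    rw [Finset.sum_insert hj] at h2
    have := i.2
    omega⟩

variable (K : Type*) [Field K]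

/-- The raw data of an "infinite magmatic bialgebra": an `(n+2)`-ary multilinear
operation and an `(n+2)`-ary cooperation for every `n`, together with a unit
element and a counit. -/
structure BOps (H : Type*) [AddCommGroup H] [Module K H] where
  /-- the `(n+2)`-ary operations `μ_{n+2}` -/
  mu : ∀ n : ℕ, MultilinearMap K (fun _ : Fin (n + 2) => H) H
  /-- the common unit of the operations -/
  one : H
  /-- the common counit of the cooperations -/
  counit : H →ₗ[K] K
  /-- the `(n+2)`-ary cooperations `Δ_{n+2}` -/
  Delta : ∀ n : ℕ, H →ₗ[K] ⨂[K] _ : Fin (n + 2), H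

variable {H : Type*} [AddCommGroup H] [Module K H]

/-- The linear map `x ↦ 1^{⊗i} ⊗ x ⊗ 1^{⊗(n-1-i)}` placing `x` in slot `i` and the
unit everywhere else. -/
noncomputable def unitSlot (one : H) {n : ℕ} (i : Fin n) :
    H →ₗ[K] ⨂[K] _ : Fin n, H :=
  (PiTensorProduct.tprod K (s := fun _ : Fin n => H)).toLinearMap (fun _ => one) i

/-- `S` is an infinite magmatic algebra: all operations share the unit, and
inserting the unit in any slot of `μ_{n+1}` yields `μ_n` on the remaining
arguments (with `μ_1 = id` as base case). -/
def IsIMAlg (S : BOps K H) : Prop :=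
  (∀ (x : Fin 2 → H) (i : Fin 2), x i = S.one → S.mu 0 x = x i.rev) ∧
  (∀ (n : ℕ) (x : Fin (n + 3) → H) (i : Fin (n + 3)), x i = S.one →
    S.mu (n + 1) x = S.mu n (fun j => x (i.succAbove j)))

/-- Contraction of the `i`-th tensor factor by a linear functional `c`:
`x_1 ⊗ ⋯ ⊗ x_{n+1} ↦ c(x_i) · (x_1 ⊗ ⋯ x̂_i ⋯ ⊗ x_{n+1})`. -/
noncomputable def ctr (c : H →ₗ[K] K) (n : ℕ) (i : Fin (n + 1)) :
    (⨂[K] _ : Fin (n + 1), H) →ₗ[K] ⨂[K] _ : Fin n, H :=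
  (TensorProduct.lid K _).toLinearMap ∘ₗ
    (TensorProduct.map
      (c ∘ₗ (PiTensorProduct.subsingletonEquiv (0 : Fin 1)).toLinearMap) LinearMap.id) ∘ₗ
    (PiTensorProduct.tmulEquiv K H).symm.toLinearMap ∘ₗ
    (PiTensorProduct.reindex K (fun _ => H)
      ((i.cycleRange).trans ((finCongr (Nat.add_comm n 1)).trans
        finSumFinEquiv.symm))).toLinearMap

/-- `S` is a (co-augmented) infinite magmatic coalgebra: the cooperations share the
counit `c`, contracting any slot of `Δ_{n+1}` by `c` yields `Δ_n` (with
`Δ_1 = id` as base case), and the unit is grouplike for all cooperations. -/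
def IsIMCoalg (S : BOps K H) : Prop :=
  S.counit S.one = 1 ∧
  (∀ n, S.Delta n S.one = PiTensorProduct.tprod K (fun _ => S.one)) ∧
  (∀ i : Fin 2,
    (PiTensorProduct.subsingletonEquiv (0 : Fin 1)).toLinearMap ∘ₗ
      ctr K S.counit 1 i ∘ₗ S.Delta 0 = LinearMap.id) ∧
  (∀ (n : ℕ) (i : Fin (n + 3)), ctr K S.counit (n + 2) i ∘ₗ S.Delta (n + 1) = S.Delta n)

open Classical in
/-- The infinite magmatic compatibility relations between the operations and the
cooperations, for arguments in the augmentation ideal (kernel of the counit). -/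
def IsCompat (S : BOps K H) : Prop :=
  ∀ (n : ℕ) (xs : Fin (n + 2) → H), (∀ i, S.counit (xs i) = 0) →
    (S.Delta n (S.mu n xs) =
      PiTensorProduct.tprod K xs + ∑ i : Fin (n + 2), unitSlot K S.one i (S.mu n xs)) ∧
    (∀ m : ℕ, m < n →
      S.Delta m (S.mu n xs) = ∑ i : Fin (m + 2), unitSlot K S.one i (S.mu n xs)) ∧
    (∀ m : ℕ, n < m →
      S.Delta m (S.mu n xs) =
        (∑ i : Fin (m + 2), unitSlot K S.one i (S.mu n xs)) +
        ∑ f ∈ Finset.univ.filter (fun f : Fin (n + 2) → Fin (m + 2) => StrictMono f),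
          PiTensorProduct.tprod K
            (fun i => if h : ∃ j, f j = i then xs h.choose else S.one))

/-- `σ` is an `(p, r)`-shuffle: a permutation of `Fin (p + r)` which is order
preserving on the first `p` and on the last `r` positions. -/
def IsShuffle (p r : ℕ) (σ : Equiv.Perm (Fin (p + r))) : Prop :=
  (∀ i j : Fin p, i < j → σ (Fin.castAdd r i) < σ (Fin.castAdd r j)) ∧
  (∀ i j : Fin r, i < j → σ (Fin.natAdd p i) < σ (Fin.natAdd p j))

/-- Pad a tensor of arity `m` with `r` copies of the unit on the right and then
permute the `m + r` factors by `σ`; this is the operation `y ↦ σ ∘ (y, 1^{⊗r})`. -/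
noncomputable def padPerm (one : H) (m r : ℕ) (σ : Equiv.Perm (Fin (m + r))) :
    (⨂[K] _ : Fin m, H) →ₗ[K] ⨂[K] _ : Fin (m + r), H :=
  (PiTensorProduct.reindex K (fun _ => H) (σ : Fin (m + r) ≃ Fin (m + r))).toLinearMap ∘ₗ
    (PiTensorProduct.reindex K (fun _ => H) finSumFinEquiv).toLinearMap ∘ₗ
    (PiTensorProduct.tmulEquiv K H).toLinearMap ∘ₗ
    ((TensorProduct.mk K _ _).flip (PiTensorProduct.tprod K (fun _ : Fin r => one)))

open Classical in
/-- The reduced cooperations `Δ̄_{n+2}`, defined recursively by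
`Δ̄_n(x) = Δ_n(x) - Σ_{i+j=n-1} 1^{⊗i} ⊗ x ⊗ 1^{⊗j}
  - Σ_{m=2}^{n-1} Σ_{σ ∈ Sh(m, n-m)} σ ∘ (Δ̄_m(x), 1^{⊗(n-m)})`. -/
noncomputable def rDelta (S : BOps K H) : (n : ℕ) → H →ₗ[K] ⨂[K] _ : Fin (n + 2), H
  | n =>
    S.Delta n - (∑ i : Fin (n + 2), unitSlot K S.one i)
      - ∑ m ∈ (Finset.range n).attach,
          ∑ σ ∈ Finset.univ.filter (IsShuffle (m.1 + 2) (n - m.1)),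
            (PiTensorProduct.reindex K (fun _ => H)
                (finCongr (show (m.1 + 2) + (n - m.1) = n + 2 by
                  have := Finset.mem_range.mp m.2; omega))).toLinearMap ∘ₗ
              padPerm K S.one (m.1 + 2) (n - m.1) σ ∘ₗ rDelta S m.1
  termination_by n => n
  decreasing_by exact Finset.mem_range.mp m.2

/-- The primitive part `Prim H = ∩_{n ≥ 2} ker Δ̄_n`. -/
noncomputable def Prim (S : BOps K H) : Submodule K H :=
  ⨅ n : ℕ, LinearMap.ker (rDelta K S n)

/-- The `n`-th tensor power of a submodule `N ⊆ H`, as a submodule of `H^{⊗n}`. -/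
noncomputable def tpow (N : Submodule K H) (n : ℕ) :
    Submodule K (⨂[K] _ : Fin n, H) :=
  LinearMap.range (PiTensorProduct.map (fun _ : Fin n => N.subtype))

/-- The coradical-type filtration: `F_0 = K·1` and
`F_r = ∩_{n ≥ 2} {x | Δ̄_n(x) ∈ (F_{r-1})^{⊗n}}`. -/
noncomputable def Fil (S : BOps K H) : ℕ → Submodule K H
  | 0 => Submodule.span K {S.one}
  | r + 1 => ⨅ n : ℕ, Submodule.comap (rDelta K S n) (tpow K (Fil S r) (n + 2))

/-- The coalgebra is connected: `H = ∪_r F_r`. -/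
def Connected (S : BOps K H) : Prop := ∀ x : H, ∃ r, x ∈ Fil K S r

/-- `J = Id - u∘c`, the projection onto the augmentation ideal. -/
noncomputable def Jmap (S : BOps K H) : H →ₗ[K] H :=
  LinearMap.id - (LinearMap.toSpanSingleton K H S.one) ∘ₗ S.counit

/-- The `(n+2)`-ary convolution power `⋆_{n+2}(J, …, J) = μ_{n+2} ∘ J^{⊗(n+2)} ∘ Δ_{n+2}`. -/
noncomputable def starJ (S : BOps K H) (n : ℕ) : H →ₗ[K] H :=
  PiTensorProduct.lift (S.mu n) ∘ₗ
    PiTensorProduct.map (fun _ => Jmap K S) ∘ₗ S.Delta n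

/-- The idempotent `e = J - Σ_{n ≥ 2} ⋆_n ∘ J^{⊗n}`; the sum is locally finite by
connectedness. -/
noncomputable def eMap (S : BOps K H) : H → H :=
  fun x => Jmap K S x - ∑ᶠ n : ℕ, starJ K S n x

attribute [local instance] Classical.decEq

/-- A model of the free infinite magmatic algebra `Mag^∞(V)` on the vector space
`V`: for each planar tree `t` a multilinear "labelled tree" map
`ι t : V^{leaves t} → M`, such that the operations are given by grafting of
labelled trees and `M` is freely spanned by the unit together with the labelled
trees (i.e. the canonical map `K ⊕ (⊕_t V^{⊗ leaves t}) → M` is bijective). -/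
structure MagAlgModel (V M : Type*) [AddCommGroup V] [Module K V]
    [AddCommGroup M] [Module K M] (S : BOps K M) where
  /-- the labelled tree `(t; v_1 ⋯ v_n)` -/
  ι : (t : PTree) → MultilinearMap K (fun _ : Fin t.leaves => V) M
  /-- the operations are given by grafting of labelled trees -/
  ι_graft : ∀ (k : ℕ) (ts : Fin (k + 2) → PTree) (v : Fin (PTree.graft k ts).leaves → V),
    S.mu k (fun j => ι (ts j) (fun i => v (sigmaIdx (fun j' => (ts j').leaves) j i))) =
      ι (.graft k ts) v
  /-- `M = K·1 ⊕ (⊕_t V^{⊗ leaves t})` via the labelled trees -/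
  free : Function.Bijective
    (LinearMap.coprod (LinearMap.toSpanSingleton K M S.one)
      (DFinsupp.lsum ℕ (fun t : PTree => PiTensorProduct.lift (ι t))))

/-- The canonical inclusion `V = Mag_1 ⊗ V → Mag^∞(V)`, `v ↦ (|; v)`. -/
noncomputable def leafLin {V M : Type*} [AddCommGroup V] [Module K V]
    [AddCommGroup M] [Module K M] {S : BOps K M} (mod : MagAlgModel K V M S) :
    V →ₗ[K] M :=
  PiTensorProduct.lift (mod.ι .leaf) ∘ₗ
    (PiTensorProduct.subsingletonEquiv (s := fun _ => V) (0 : Fin 1)).symm.toLinearMap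

open Classical in
/-- A model of the free infinite magmatic bialgebra `Mag^∞(V)`: a model of the free
algebra whose cooperations are the ungraftings of labelled trees. -/
structure MagModel (V M : Type*) [AddCommGroup V] [Module K V]
    [AddCommGroup M] [Module K M] (S : BOps K M) extends MagAlgModel K V M S where
  counit_one : S.counit S.one = 1
  counit_ι : ∀ (t : PTree) (v : Fin t.leaves → V), S.counit (ι t v) = 0
  delta_one : ∀ n, S.Delta n S.one = PiTensorProduct.tprod K (fun _ => S.one)
  delta_leaf : ∀ (n : ℕ) (v : Fin (PTree.leaf).leaves → V),
    S.Delta n (ι .leaf v) = ∑ i : Fin (n + 2), unitSlot K S.one i (ι .leaf v)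
  delta_graft_eq : ∀ (k : ℕ) (ts : Fin (k + 2) → PTree)
      (v : Fin (PTree.graft k ts).leaves → V),
    S.Delta k (ι (.graft k ts) v) =
      PiTensorProduct.tprod K
        (fun j => ι (ts j) (fun i => v (sigmaIdx (fun j' => (ts j').leaves) j i))) +
      ∑ i : Fin (k + 2), unitSlot K S.one i (ι (.graft k ts) v)
  delta_graft_lt : ∀ (m k : ℕ) (ts : Fin (k + 2) → PTree)
      (v : Fin (PTree.graft k ts).leaves → V), m < k →
    S.Delta m (ι (.graft k ts) v) =
      ∑ i : Fin (m + 2), unitSlot K S.one i (ι (.graft k ts) v)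
  delta_graft_gt : ∀ (m k : ℕ) (ts : Fin (k + 2) → PTree)
      (v : Fin (PTree.graft k ts).leaves → V), k < m →
    S.Delta m (ι (.graft k ts) v) =
      (∑ i : Fin (m + 2), unitSlot K S.one i (ι (.graft k ts) v)) +
      ∑ f ∈ Finset.univ.filter (fun f : Fin (k + 2) → Fin (m + 2) => StrictMono f),
        PiTensorProduct.tprod K (fun i =>
          if h : ∃ j, f j = i then
            ι (ts h.choose) (fun i' => v (sigmaIdx (fun j' => (ts j').leaves) h.choose i'))
          else S.one)


section Aux

variable {K}

/-- `unitSlot` on elements, explicitly. -/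
lemma unitSlot_apply (one : H) {n : ℕ} (i : Fin n) (y : H) :
    unitSlot K one i y =
      PiTensorProduct.tprod K (Function.update (fun _ : Fin n => one) i y) := rfl

lemma ctr11_tprod (c : H →ₗ[K] K) (f : Fin 2 → H) :
    (PiTensorProduct.subsingletonEquiv (0 : Fin 1)).toLinearMap
      (ctr K c 1 1 (PiTensorProduct.tprod K f)) = c (f 1) • f 0 := by
  have h1 : (((1 : Fin 2).cycleRange).trans ((finCongr (Nat.add_comm 1 1)).trans
      finSumFinEquiv.symm)).symm (Sum.inl (0 : Fin 1)) = 1 := by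
    rw [Equiv.symm_apply_eq]
    simp only [Equiv.trans_apply, Fin.cycleRange_self]
    have : (finCongr (Nat.add_comm 1 1) (0 : Fin 2)) = Fin.castAdd 1 (0 : Fin 1) := rfl
    rw [this, finSumFinEquiv_symm_apply_castAdd]
  have h2 : (((1 : Fin 2).cycleRange).trans ((finCongr (Nat.add_comm 1 1)).trans
      finSumFinEquiv.symm)).symm (Sum.inr (0 : Fin 1)) = 0 := by
    rw [Equiv.symm_apply_eq]
    have hlt : (0 : Fin 2) < 1 := by decide
    simp only [Equiv.trans_apply, Fin.cycleRange_of_lt hlt]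
    have : (finCongr (Nat.add_comm 1 1) ((0 : Fin 2) + 1)) = Fin.natAdd 1 (0 : Fin 1) := rfl
    rw [this, finSumFinEquiv_symm_apply_natAdd]
  rw [ctr]
  simp only [LinearMap.comp_apply, LinearEquiv.coe_coe, PiTensorProduct.reindex_tprod,
    PiTensorProduct.tmulEquiv_symm_apply, TensorProduct.map_tmul, LinearMap.comp_apply,
    PiTensorProduct.subsingletonEquiv_apply_tprod, TensorProduct.lid_tmul, LinearMap.id_coe,
    id_eq, map_smul, h1, h2]

end Aux

/-- In a connected infinite magmatic bialgebra `H`, the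
idempotent `e = J - Σ_{n≥2} ⋆_n ∘ J^{⊗n}` kills all products of
augmentation-ideal elements: `e(μ_n(x_1 ⊗ ⋯ ⊗ x_n)) = 0` for `x_i ∈ H̄`. -/
theorem eMap_kills_products (H : Type*) [AddCommGroup H] [Module K H]
    (S : BOps K H) (hA : IsIMAlg K S) (hC : IsIMCoalg K S)
    (hcomp : IsCompat K S) (hconn : Connected K S) :
    ∀ (n : ℕ) (xs : Fin (n + 2) → H), (∀ i, S.counit (xs i) = 0) →
      eMap K S (S.mu n xs) = 0 := by
  intro n xs hxs
  have hJone : Jmap K S S.one = 0 := by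
    simp [Jmap, hC.1]
  have hJxs : ∀ i, Jmap K S (xs i) = xs i := fun i => by
    simp [Jmap, hxs i]
  -- J^{⊗} kills every `unitSlot` term
  have hkill : ∀ (m : ℕ) (i : Fin (m + 2)) (y : H),
      PiTensorProduct.map (fun _ : Fin (m + 2) => Jmap K S) (unitSlot K S.one i y) = 0 := by
    intro m i y
    rw [unitSlot_apply, PiTensorProduct.map_tprod]
    obtain ⟨j, hj⟩ := exists_ne i
    refine MultilinearMap.map_coord_zero _ j ?_
    simp [Function.update_of_ne hj, hJone]
  have hmain := hcomp n xs hxs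
  -- the `n`-th convolution power fixes the product
  have hs_eq : starJ K S n (S.mu n xs) = S.mu n xs := by
    rw [starJ]
    simp only [LinearMap.comp_apply, hmain.1, map_add, map_sum, hkill,
      Finset.sum_const_zero, add_zero, PiTensorProduct.map_tprod,
      PiTensorProduct.lift.tprod]
    simp only [hJxs]
  -- lower convolution powers vanish
  have hs_lt : ∀ m, m < n → starJ K S m (S.mu n xs) = 0 := by
    intro m hm
    rw [starJ]
    simp only [LinearMap.comp_apply, hmain.2.1 m hm, map_sum, hkill,
      Finset.sum_const_zero, map_zero]
  -- higher convolution powers vanish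
  have hs_gt : ∀ m, n < m → starJ K S m (S.mu n xs) = 0 := by
    intro m hm
    rw [starJ]
    simp only [LinearMap.comp_apply, hmain.2.2 m hm, map_add, map_sum, hkill,
      Finset.sum_const_zero, zero_add, add_zero]
    refine Finset.sum_eq_zero fun f hf => ?_
    have hsur : ¬ Function.Surjective f := by
      intro hsurj
      have := Fintype.card_le_of_surjective f hsurj
      simp only [Fintype.card_fin] at this
      omega
    rw [Function.Surjective] at hsur
    push_neg at hsur
    obtain ⟨i0, hi0⟩ := hsur
    rw [PiTensorProduct.map_tprod, PiTensorProduct.lift.tprod]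
    refine MultilinearMap.map_coord_zero _ i0 ?_
    rw [dif_neg (not_exists.mpr hi0), hJone]
  -- the counit kills the product
  have hc : S.counit (S.mu n xs) = 0 := by
    have hkey : ∀ y : H, (PiTensorProduct.subsingletonEquiv (0 : Fin 1)).toLinearMap
        (ctr K S.counit 1 1 (S.Delta 0 y)) = y := by
      intro y
      have := LinearMap.congr_fun (hC.2.2.1 1) y
      simpa only [LinearMap.comp_apply, LinearMap.id_apply] using this
    have hslots : (PiTensorProduct.subsingletonEquiv (0 : Fin 1)).toLinearMap
        (ctr K S.counit 1 1
          (∑ i : Fin 2, unitSlot K S.one i (S.mu n xs)))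
        = S.mu n xs + S.counit (S.mu n xs) • S.one := by
      rw [Fin.sum_univ_two, unitSlot_apply, unitSlot_apply, map_add, map_add,
        ctr11_tprod, ctr11_tprod]
      have e01 : Function.update (fun _ : Fin 2 => S.one) 0 (S.mu n xs) 1 = S.one :=
        Function.update_of_ne (by decide) _ _
      have e00 : Function.update (fun _ : Fin 2 => S.one) 0 (S.mu n xs) 0 = S.mu n xs :=
        Function.update_self _ _ _
      have e11 : Function.update (fun _ : Fin 2 => S.one) 1 (S.mu n xs) 1 = S.mu n xs :=
        Function.update_self _ _ _
      have e10 : Function.update (fun _ : Fin 2 => S.one) 1 (S.mu n xs) 0 = S.one :=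
        Function.update_of_ne (by decide) _ _
      rw [e01, e00, e11, e10, hC.1, one_smul]
    have hone : S.counit (S.mu n xs) • S.one = 0 := by
      rcases Nat.eq_zero_or_pos n with hn | hn
      · subst hn
        have h0 := hmain.1
        have := hkey (S.mu 0 xs)
        rw [h0, map_add, map_add, ctr11_tprod, hslots, hxs 1, zero_smul, zero_add] at this
        rwa [add_eq_left] at this
      · have h0 := hmain.2.1 0 hn
        have := hkey (S.mu n xs)
        rw [h0, hslots] at this
        rwa [add_eq_left] at this
    have := congrArg S.counit hone
    simpa [hC.1] using this
  have hJx : Jmap K S (S.mu n xs) = S.mu n xs := by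
    simp [Jmap, hc]
  show Jmap K S (S.mu n xs) - ∑ᶠ m : ℕ, starJ K S m (S.mu n xs) = 0
  rw [finsum_eq_single (fun m => starJ K S m (S.mu n xs)) n, hs_eq, hJx, sub_self]
  intro m hm
  rcases lt_or_gt_of_ne hm with h | h
  · exact hs_lt m h
  · exact hs_gt m h

end
end

section
/- In a connected infinite magmatic bialgebra H, the map e := J - Σ_{n≥2} ⋆_n ∘ J^{⊗n} is idempotent: e ∘ e = e. -/
open scoped TensorProduct PiTensorProduct

noncomputable section

variable (K : Type*) [Field K]

variable {H : Type*} [AddCommGroup H] [Module K H]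

attribute [local instance] Classical.decEq

section IdemAux

open PiTensorProduct

lemma Jmap_apply (S : BOps K H) (x : H) :
    Jmap K S x = x - S.counit x • S.one := by
  simp [Jmap, LinearMap.toSpanSingleton_apply]

lemma Jmap_one (S : BOps K H) (hC : IsIMCoalg K S) : Jmap K S S.one = 0 := by
  rw [Jmap_apply, hC.1, one_smul, sub_self]

lemma counit_Jmap (S : BOps K H) (hC : IsIMCoalg K S) (x : H) :
    S.counit (Jmap K S x) = 0 := by
  rw [Jmap_apply, map_sub, map_smul, hC.1, smul_eq_mul, mul_one, sub_self]

lemma Jmap_Jmap (S : BOps K H) (hC : IsIMCoalg K S) (x : H) :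
    Jmap K S (Jmap K S x) = Jmap K S x := by
  rw [Jmap_apply K S (Jmap K S x), counit_Jmap K S hC, zero_smul, sub_zero]

lemma starJ_apply (S : BOps K H) (n : ℕ) (x : H) :
    starJ K S n x =
      PiTensorProduct.lift (S.mu n)
        (PiTensorProduct.map (fun _ => Jmap K S) (S.Delta n x)) := rfl

lemma mapJ_tprod_eq_zero (S : BOps K H) (hC : IsIMCoalg K S) {n : ℕ}
    (f : Fin n → H) (i : Fin n) (hf : f i = S.one) :
    PiTensorProduct.map (fun _ : Fin n => Jmap K S) (PiTensorProduct.tprod K f) = 0 := by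
  rw [PiTensorProduct.map_tprod]
  exact MultilinearMap.map_coord_zero _ i (by rw [hf, Jmap_one K S hC])

lemma unitSlot_eq_tprod (one : H) {n : ℕ} (i : Fin n) (y : H) :
    unitSlot K one i y = PiTensorProduct.tprod K (Function.update (fun _ => one) i y) := by
  simp [unitSlot, MultilinearMap.toLinearMap_apply]

lemma mapJ_unitSlot (S : BOps K H) (hC : IsIMCoalg K S) {n : ℕ} (i : Fin (n + 2)) (y : H) :
    PiTensorProduct.map (fun _ : Fin (n + 2) => Jmap K S) (unitSlot K S.one i y) = 0 := by
  obtain ⟨j, hj⟩ := exists_ne i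
  rw [unitSlot_eq_tprod]
  exact mapJ_tprod_eq_zero K S hC _ j (by simp [Function.update_of_ne hj])

lemma ctr_one_zero_tprod (c : H →ₗ[K] K) (f : Fin 2 → H) :
    (PiTensorProduct.subsingletonEquiv (0 : Fin 1)).toLinearMap
      (ctr K c 1 (0 : Fin 2) (PiTensorProduct.tprod K f)) = c (f 0) • f 1 := by
  simp only [ctr, LinearMap.coe_comp, LinearEquiv.coe_coe, Function.comp_apply,
    PiTensorProduct.reindex_tprod, PiTensorProduct.tmulEquiv_symm_apply,
    TensorProduct.map_tmul, LinearMap.id_coe, id_eq,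
    PiTensorProduct.subsingletonEquiv_apply_tprod, TensorProduct.lid_tmul, map_smul]
  congr 2

lemma counit_mu (S : BOps K H) (hC : IsIMCoalg K S) (hcomp : IsCompat K S)
    (n : ℕ) (xs : Fin (n + 2) → H) (h0 : ∀ i, S.counit (xs i) = 0) :
    S.counit (S.mu n xs) = 0 := by
  set y := S.mu n xs with hy
  have hax : (PiTensorProduct.subsingletonEquiv (0 : Fin 1)).toLinearMap
      ((ctr K S.counit 1 (0 : Fin 2)) (S.Delta 0 y)) = y := by
    have h := hC.2.2.1 (0 : Fin 2)
    have := LinearMap.ext_iff.mp h y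
    simpa using this
  have hslot : (PiTensorProduct.subsingletonEquiv (0 : Fin 1)).toLinearMap
      ((ctr K S.counit 1 (0 : Fin 2)) (∑ i : Fin 2, unitSlot K S.one i y))
      = S.counit y • S.one + y := by
    rw [Fin.sum_univ_two, map_add, map_add, unitSlot_eq_tprod, unitSlot_eq_tprod,
      ctr_one_zero_tprod, ctr_one_zero_tprod]
    simp [hC.1]
  have key : S.counit y • S.one = 0 := by
    rcases n with _ | n
    · have hΔ := (hcomp 0 xs h0).1
      rw [← hy] at hΔ
      rw [hΔ, map_add, map_add, hslot, ctr_one_zero_tprod, h0 0, zero_smul, zero_add] at hax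
      have := congrArg (fun z => z - y) hax
      simpa using this
    · have hΔ := (hcomp (n + 1) xs h0).2.1 0 (Nat.succ_pos n)
      rw [← hy] at hΔ
      rw [hΔ, hslot] at hax
      have := congrArg (fun z => z - y) hax
      simpa using this
  have := congrArg S.counit key
  rw [map_smul, hC.1, smul_eq_mul, mul_one, map_zero] at this
  exact this

lemma counit_starJ (S : BOps K H) (hC : IsIMCoalg K S) (hcomp : IsCompat K S)
    (n : ℕ) (x : H) : S.counit (starJ K S n x) = 0 := by
  rw [starJ_apply]
  induction S.Delta n x using PiTensorProduct.induction_on with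
  | smul_tprod r f =>
    simp only [map_smul, PiTensorProduct.map_tprod, PiTensorProduct.lift.tprod]
    rw [counit_mu K S hC hcomp n _ (fun i => counit_Jmap K S hC (f i)), smul_zero]
  | add u v hu hv =>
    simp only [map_add, hu, hv, add_zero]

lemma keyD_lt (S : BOps K H) (hC : IsIMCoalg K S) (hcomp : IsCompat K S)
    {m n : ℕ} (hmn : m < n) (w : ⨂[K] _ : Fin (n + 2), H) :
    PiTensorProduct.map (fun _ : Fin (m + 2) => Jmap K S)
      (S.Delta m (PiTensorProduct.lift (S.mu n)
        (PiTensorProduct.map (fun _ => Jmap K S) w))) = 0 := by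
  induction w using PiTensorProduct.induction_on with
  | smul_tprod r f =>
    simp only [map_smul, PiTensorProduct.map_tprod, PiTensorProduct.lift.tprod]
    rw [(hcomp n (fun i => Jmap K S (f i)) (fun i => counit_Jmap K S hC (f i))).2.1 m hmn,
      map_sum]
    simp [mapJ_unitSlot K S hC]
  | add u v hu hv => simp only [map_add, hu, hv, add_zero]

lemma keyD_eq (S : BOps K H) (hC : IsIMCoalg K S) (hcomp : IsCompat K S)
    {n : ℕ} (w : ⨂[K] _ : Fin (n + 2), H) :
    PiTensorProduct.map (fun _ : Fin (n + 2) => Jmap K S)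
      (S.Delta n (PiTensorProduct.lift (S.mu n)
        (PiTensorProduct.map (fun _ => Jmap K S) w))) =
    PiTensorProduct.map (fun _ : Fin (n + 2) => Jmap K S) w := by
  induction w using PiTensorProduct.induction_on with
  | smul_tprod r f =>
    simp only [map_smul, PiTensorProduct.map_tprod, PiTensorProduct.lift.tprod]
    rw [(hcomp n (fun i => Jmap K S (f i)) (fun i => counit_Jmap K S hC (f i))).1,
      map_add, map_sum, PiTensorProduct.map_tprod]
    have h1 : (PiTensorProduct.tprod K fun i => Jmap K S (Jmap K S (f i)))
        = PiTensorProduct.tprod K fun i => Jmap K S (f i) := by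
      congr 1
      funext i
      exact Jmap_Jmap K S hC (f i)
    rw [h1]
    simp [mapJ_unitSlot K S hC]
  | add u v hu hv => simp only [map_add, hu, hv]

lemma keyD_gt (S : BOps K H) (hC : IsIMCoalg K S) (hcomp : IsCompat K S)
    {m n : ℕ} (hnm : n < m) (w : ⨂[K] _ : Fin (n + 2), H) :
    PiTensorProduct.map (fun _ : Fin (m + 2) => Jmap K S)
      (S.Delta m (PiTensorProduct.lift (S.mu n)
        (PiTensorProduct.map (fun _ => Jmap K S) w))) = 0 := by
  induction w using PiTensorProduct.induction_on with
  | smul_tprod r f =>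
    simp only [map_smul, PiTensorProduct.map_tprod, PiTensorProduct.lift.tprod]
    rw [(hcomp n (fun i => Jmap K S (f i)) (fun i => counit_Jmap K S hC (f i))).2.2 m hnm,
      map_add, map_sum, map_sum]
    have hz1 : ∀ i : Fin (m + 2),
        PiTensorProduct.map (fun _ : Fin (m + 2) => Jmap K S)
          (unitSlot K S.one i (S.mu n fun i => Jmap K S (f i))) = 0 :=
      fun i => mapJ_unitSlot K S hC i _
    have hz2 : ∀ g ∈ Finset.univ.filter
        (fun g : Fin (n + 2) → Fin (m + 2) => StrictMono g),
        PiTensorProduct.map (fun _ : Fin (m + 2) => Jmap K S)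
          (PiTensorProduct.tprod K (fun i =>
            if h : ∃ j, g j = i then (fun i => Jmap K S (f i)) h.choose else S.one)) = 0 := by
      intro g _
      have hns : ¬ Function.Surjective g := by
        intro hs
        have := Fintype.card_le_of_surjective g hs
        simp only [Fintype.card_fin] at this
        omega
      rw [Function.Surjective] at hns
      push_neg at hns
      obtain ⟨i₀, hi₀⟩ := hns
      exact mapJ_tprod_eq_zero K S hC _ i₀
        (dif_neg (by push_neg; exact hi₀))
    rw [Finset.sum_congr rfl (fun i _ => hz1 i), Finset.sum_congr rfl hz2]
    simp
  | add u v hu hv => simp only [map_add, hu, hv, add_zero]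

lemma mapJ_delta_Jmap (S : BOps K H) (hC : IsIMCoalg K S) (m : ℕ) (x : H) :
    PiTensorProduct.map (fun _ : Fin (m + 2) => Jmap K S) (S.Delta m (Jmap K S x)) =
    PiTensorProduct.map (fun _ : Fin (m + 2) => Jmap K S) (S.Delta m x) := by
  rw [Jmap_apply, map_sub, map_smul, hC.2.1 m, map_sub, map_smul,
    mapJ_tprod_eq_zero K S hC _ 0 rfl, smul_zero, sub_zero]

lemma starJ_Jmap (S : BOps K H) (hC : IsIMCoalg K S) (n : ℕ) (x : H) :
    starJ K S n (Jmap K S x) = starJ K S n x := by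
  rw [starJ_apply, starJ_apply, mapJ_delta_Jmap K S hC]

lemma mapJ_delta_starJ (S : BOps K H) (hC : IsIMCoalg K S) (hcomp : IsCompat K S)
    (m n : ℕ) (x : H) :
    PiTensorProduct.map (fun _ : Fin (m + 2) => Jmap K S) (S.Delta m (starJ K S n x)) =
    if m = n then PiTensorProduct.map (fun _ : Fin (m + 2) => Jmap K S) (S.Delta m x)
    else 0 := by
  rcases lt_trichotomy m n with h | h | h
  · rw [if_neg h.ne, starJ_apply]
    exact keyD_lt K S hC hcomp h _
  · subst h
    rw [if_pos rfl, starJ_apply]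
    exact keyD_eq K S hC hcomp _
  · rw [if_neg h.ne', starJ_apply]
    exact keyD_gt K S hC hcomp h _

lemma eMap_apply (S : BOps K H) (x : H) :
    eMap K S x = Jmap K S x - ∑ᶠ n : ℕ, starJ K S n x := rfl

end IdemAux

/-- In a connected infinite magmatic bialgebra `H`, the map
`e = J - Σ_{n≥2} ⋆_n ∘ J^{⊗n}` is idempotent: `e ∘ e = e`. -/
theorem eMap_idempotent (H : Type*) [AddCommGroup H] [Module K H]
    (S : BOps K H) (hA : IsIMAlg K S) (hC : IsIMCoalg K S)
    (hcomp : IsCompat K S) (hconn : Connected K S) :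
    ∀ x : H, eMap K S (eMap K S x) = eMap K S x := by
  intro x
  by_cases hfin : (Function.support fun n => starJ K S n x).Finite
  · have hsum : (∑ᶠ n, starJ K S n x) = ∑ n ∈ hfin.toFinset, starJ K S n x :=
      finsum_eq_sum _ hfin
    have hst : ∀ m, starJ K S m (eMap K S x) = 0 := by
      intro m
      have hd : PiTensorProduct.map (fun _ : Fin (m + 2) => Jmap K S)
          (S.Delta m (eMap K S x))
          = PiTensorProduct.map (fun _ : Fin (m + 2) => Jmap K S) (S.Delta m x) -
            (if m ∈ hfin.toFinset then
              PiTensorProduct.map (fun _ : Fin (m + 2) => Jmap K S) (S.Delta m x) else 0) := by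
        rw [eMap_apply, hsum, map_sub, map_sub, mapJ_delta_Jmap K S hC, map_sum, map_sum,
          Finset.sum_congr rfl (fun n _ => mapJ_delta_starJ K S hC hcomp m n x),
          Finset.sum_ite_eq _ m _]
      by_cases hm : m ∈ hfin.toFinset
      · rw [if_pos hm, sub_self] at hd
        rw [starJ_apply, hd, map_zero]
      · rw [if_neg hm, sub_zero] at hd
        rw [starJ_apply, hd, ← starJ_apply]
        have : starJ K S m x = 0 := by
          by_contra hne
          exact hm (hfin.mem_toFinset.mpr hne)
        exact this
    have hce : S.counit (eMap K S x) = 0 := by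
      rw [eMap_apply, hsum, map_sub, counit_Jmap K S hC, map_sum, zero_sub, neg_eq_zero]
      exact Finset.sum_eq_zero fun n _ => counit_starJ K S hC hcomp n x
    rw [eMap_apply K S (eMap K S x), finsum_congr hst, finsum_zero, sub_zero,
      Jmap_apply, hce, zero_smul, sub_zero]
  · have h0 : (∑ᶠ n, starJ K S n x) = 0 := finsum_of_infinite_support hfin
    have hex : eMap K S x = Jmap K S x := by rw [eMap_apply, h0, sub_zero]
    rw [hex, eMap_apply, Jmap_Jmap K S hC,
      finsum_congr (fun n => starJ_Jmap K S hC n x), h0, sub_zero, ← hex]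

end
end
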